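/- arXiv:1306.1224 — 2 statements merged into one kernel-verified Lean document; each statement's English description precedes it below -/
import Mathlib

section
/- The polynomials B_n^{(ν)} satisfy the Bell-polynomial recurrence B_n^{(ν)}(r) = r·(ν+n)! Σ_{k=0}^{n−1} C(n−1,k) (−1)^k k!/(ν+n−k−1)! · 2^{2k+2} ζ_ν(2k+2) B_{n−1−k}^{(ν)}(r) for n ≥ 1, with B_0^{(ν)}(r) = 1. -/
/-! Write `Ĩ_ν = exp F` with `F = log Ĩ_ν` in the variable `x = (z/2)²`. Logarithmic
differentiation gives `(Ĩ_ν^r)' = r F' Ĩ_ν^r`; comparing coefficients of `x^(n-1)` yields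
`n c_n(Ĩ_ν^r) = r Σ_k c_k(F') c_(n-1-k)(Ĩ_ν^r)` with `c_k(F') = (-1)^k 4^(k+1) ζ_ν(2k+2)`, which
is the recurrence after clearing the factorials. Since `exp F` is only given coefficientwise,
`(exp F)' = F' exp F` is checked on the truncations `Σ_{j ≤ N} F^j / j!`: as `F` has no constant
term, they agree with `exp F` up to degree `N`. -/

open Finset

/-- The normalized modified Bessel function `Ĩ_ν`, as a formal power series in the
variable `x = (z/2)²`:  `Ĩ_ν(z) = Σ_k ν!/(k!(k+ν)!) x^k`. -/
noncomputable def besselItilde (ν : ℕ) : PowerSeries ℝ :=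
  PowerSeries.mk fun k => (ν.factorial : ℝ) / (k.factorial * (k + ν).factorial)

namespace PowerSeries

section CommSemiring

variable {R : Type*} [CommSemiring R]

theorem coeff_pow_eq_zero_of_lt {F : R⟦X⟧} (hF : constantCoeff F = 0) {n j : ℕ} (h : n < j) :
    coeff n (F ^ j) = 0 := by
  obtain ⟨g, rfl⟩ := X_dvd_iff.mpr hF
  rw [mul_pow, coeff_X_pow_mul', if_neg (by omega)]

theorem derivative_pow_eq_of_derivative_eq_mul {G H : R⟦X⟧} (h : d⁄dX R G = H * G) (r : ℕ) :
    d⁄dX R (G ^ r) = r * H * G ^ r := by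
  cases r with
  | zero => simp
  | succ r => rw [derivative_pow, h, add_tsub_cancel_right, pow_succ]; ring

theorem succ_mul_coeff_succ_of_derivative_eq {P H : R⟦X⟧} {r : ℕ}
    (h : d⁄dX R P = r * H * P) (n : ℕ) :
    (n + 1) * coeff (n + 1) P = r * ∑ k ∈ range (n + 1), coeff k H * coeff (n - k) P := by
  have := congrArg (coeff n) h
  rw [coeff_derivative, ← map_natCast (C (R := R)), mul_assoc, coeff_C_mul, coeff_mul,
    Nat.sum_antidiagonal_eq_sum_range_succ_mk] at this
  rw [mul_comm, this]

end CommSemiring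

section Field

variable {K : Type*} [Field K]

noncomputable def expTrunc (F : K⟦X⟧) (N : ℕ) : K⟦X⟧ :=
  ∑ j ∈ range (N + 1), C (j.factorial : K)⁻¹ * F ^ j

theorem coeff_expTrunc (F : K⟦X⟧) (N n : ℕ) :
    coeff n (expTrunc F N) = ∑ j ∈ range (N + 1), (j.factorial : K)⁻¹ * coeff n (F ^ j) := by
  simp only [expTrunc, map_sum, coeff_C_mul]

theorem coeff_expTrunc_of_le {F : K⟦X⟧} (hF : constantCoeff F = 0) {n N : ℕ} (h : n ≤ N) :
    coeff n (expTrunc F N) = coeff n (expTrunc F n) := by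
  rw [coeff_expTrunc, coeff_expTrunc]
  refine (sum_subset (range_subset_range.mpr (by omega)) fun j _ hj => ?_).symm
  rw [coeff_pow_eq_zero_of_lt hF (by simpa using hj), mul_zero]

theorem derivative_expTrunc_succ [CharZero K] (F : K⟦X⟧) (N : ℕ) :
    d⁄dX K (expTrunc F (N + 1)) = d⁄dX K F * expTrunc F N := by
  rw [expTrunc, map_sum, sum_range_succ', expTrunc, mul_sum]
  simp only [Derivation.leibniz, derivative_C, smul_zero, add_zero, pow_zero, derivative_one]
  refine sum_congr rfl fun j _ => ?_
  have hfac : (((j + 1).factorial : K))⁻¹ * (j + 1 : ℕ) = (j.factorial : K)⁻¹ := by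
    rw [Nat.factorial_succ, Nat.cast_mul]
    field_simp
  rw [smul_eq_mul, derivative_pow, add_tsub_cancel_right, ← map_natCast (C (R := K)), ← hfac,
    map_mul]
  ring

theorem derivative_eq_derivative_mul_of_coeff_eq_exp [CharZero K] {F G : K⟦X⟧}
    (hF : constantCoeff F = 0)
    (hG : ∀ n, coeff n G = ∑ j ∈ range (n + 1), (j.factorial : K)⁻¹ * coeff n (F ^ j)) :
    d⁄dX K G = d⁄dX K F * G := by
  have hG' : ∀ n N, n ≤ N → coeff n G = coeff n (expTrunc F N) := fun n N h => by
    rw [hG, ← coeff_expTrunc, coeff_expTrunc_of_le hF h]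
  ext m
  calc coeff m (d⁄dX K G) = coeff m (d⁄dX K (expTrunc F (m + 1))) := by
        rw [coeff_derivative, coeff_derivative, hG' _ _ le_rfl]
    _ = coeff m (d⁄dX K F * expTrunc F m) := by rw [derivative_expTrunc_succ]
    _ = coeff m (d⁄dX K F * G) := by
        simp only [coeff_mul]
        exact sum_congr rfl fun p hp => by rw [hG' p.2 m (HasAntidiagonal.antidiagonal.snd_le hp)]

end Field

end PowerSeries

open PowerSeries

/-- `log Ĩ_ν` in the variable `x = (z/2)²`, where `zeta2 p = ζ_ν(2p)` and `z^(2p) = 4^p x^p`. -/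
noncomputable def logBesselItilde (zeta2 : ℕ → ℝ) : ℝ⟦X⟧ :=
  mk fun p => if p = 0 then (0 : ℝ) else (-1) ^ (p + 1) / p * zeta2 p * 4 ^ p

theorem constantCoeff_logBesselItilde (zeta2 : ℕ → ℝ) :
    constantCoeff (logBesselItilde zeta2) = 0 := by
  rw [← coeff_zero_eq_constantCoeff_apply, logBesselItilde, coeff_mk, if_pos rfl]

theorem coeff_derivative_logBesselItilde (zeta2 : ℕ → ℝ) (k : ℕ) :
    coeff k (d⁄dX ℝ (logBesselItilde zeta2)) = (-1) ^ k * zeta2 (k + 1) * 4 ^ (k + 1) := by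
  rw [coeff_derivative, logBesselItilde, coeff_mk, if_neg k.succ_ne_zero]
  push_cast
  field_simp
  ring

/-- Bell-polynomial recurrence for the `B_n^{(ν)}(r)`:
`B_n(r) = r (ν+n)! Σ_{k=0}^{n−1} C(n−1,k) (−1)^k k!/(ν+n−k−1)! 2^{2k+2} ζ_ν(2k+2) B_{n−1−k}(r)`,
where `zeta2 p` stands for `ζ_ν(2p)`, defined via
`log Ĩ_ν(z) = Σ_p ((−1)^{p+1}/p) ζ_ν(2p) z^{2p}` (i.e., in the variable `x = (z/2)²`,
`Ĩ_ν = exp(Σ_p ((−1)^{p+1}/p) ζ_ν(2p) 4^p x^p)`, the exponential of a series with zero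
constant term being given coefficientwise by `coeff n (exp F) = Σ_j coeff n (F^j)/j!`),
and `B_n^{(ν)}(r)` are the coefficients in
`Ĩ_ν(z)^r = Σ_k ν!/(k!(k+ν)!) B_k^{(ν)}(r)(z/2)^{2k}`. -/
theorem B_bell_recurrence (ν : ℕ) (zeta2 : ℕ → ℝ)
    (hlog : ∀ n, PowerSeries.coeff (R := ℝ) n (besselItilde ν) =
      ∑ j ∈ Finset.range (n + 1),
        ((j.factorial : ℝ))⁻¹ * PowerSeries.coeff (R := ℝ) n
          ((PowerSeries.mk fun p =>
            if p = 0 then (0 : ℝ) else (-1) ^ (p + 1) / p * zeta2 p * 4 ^ p) ^ j))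
    (B : ℕ → ℕ → ℝ)
    (hB : ∀ r n, PowerSeries.coeff (R := ℝ) n ((besselItilde ν) ^ r) =
      (ν.factorial : ℝ) / (n.factorial * (n + ν).factorial) * B n r) :
    ∀ (r n : ℕ), 1 ≤ n →
      B n r = (r : ℝ) * ((ν + n).factorial : ℝ) *
        ∑ k ∈ Finset.range n,
          ((n - 1).choose k : ℝ) * (-1) ^ k * (k.factorial : ℝ) /
            ((ν + n - k - 1).factorial : ℝ) * 2 ^ (2 * k + 2) * zeta2 (k + 1) *
            B (n - 1 - k) r := by
  intro r n hn
  obtain ⟨m, rfl⟩ := Nat.exists_eq_add_of_le' hn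
  have hexp := derivative_eq_derivative_mul_of_coeff_eq_exp
    (constantCoeff_logBesselItilde zeta2) hlog
  have hrec := succ_mul_coeff_succ_of_derivative_eq
    (derivative_pow_eq_of_derivative_eq_mul hexp r) m
  simp only [hB, coeff_derivative_logBesselItilde] at hrec
  have hterm : ∀ k ∈ range (m + 1),
      ((m + 1 - 1).choose k : ℝ) * (-1) ^ k * k.factorial / (ν + (m + 1) - k - 1).factorial *
          2 ^ (2 * k + 2) * zeta2 (k + 1) * B (m + 1 - 1 - k) r =
        m.factorial / ν.factorial * ((-1) ^ k * zeta2 (k + 1) * 4 ^ (k + 1) *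
          (ν.factorial / ((m - k).factorial * (m - k + ν).factorial) * B (m - k) r)) := by
    intro k hk
    have hkm : k ≤ m := Nat.lt_succ_iff.mp (mem_range.mp hk)
    have h4 : (2 : ℝ) ^ (2 * k + 2) = 4 ^ (k + 1) := by
      rw [show 2 * k + 2 = 2 * (k + 1) by ring, pow_mul]
      norm_num
    rw [Nat.add_sub_cancel, show ν + (m + 1) - k - 1 = m - k + ν by omega,
      Nat.cast_choose ℝ hkm, h4]
    field_simp
  have hsolve : B (m + 1) r =
      (m + 1).factorial * (m + 1 + ν).factorial / ((m + 1) * ν.factorial) *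
      (r * ∑ k ∈ range (m + 1), (-1) ^ k * zeta2 (k + 1) * 4 ^ (k + 1) *
        (ν.factorial / ((m - k).factorial * (m - k + ν).factorial) * B (m - k) r)) := by
    rw [← hrec]
    field_simp
  rw [sum_congr rfl hterm, ← mul_sum, hsolve, Nat.factorial_succ, add_comm ν]
  push_cast
  field_simp
end

section
/- As formal power series identities, the coefficients b_n(ν) defined by Σ_{n≥1} x^n b_n(ν)/((ν+n)!(n−1)!) = (x/(ν+1)!)·(√x I_ν(2√x)/((ν+1) I_{ν+1}(2√x)) − 2) satisfy b_n(ν) = (−1)^n (n+ν)!(n−1)!/((ν+1)!(ν+1)) · 2^{2n−2} ζ_{ν+1}(2n−2) for n ≥ 2; in particular b_2(ν) = 1/(ν+1). -/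
open Finset

/-- In the variable `x` (with `z = 2√x`), `√x I_ν(2√x) = x^{(ν+1)/2} Σ_k x^k/(k!(k+ν)!)` and
`I_{ν+1}(2√x) = x^{(ν+1)/2} Σ_k x^k/(k!(k+ν+1)!)`, so the quotient
`√x I_ν(2√x)/I_{ν+1}(2√x)` is the formal power series `F_ν G_ν⁻¹`, where: -/
noncomputable def besselNumer (ν : ℕ) : PowerSeries ℝ :=
  PowerSeries.mk fun k => (1 : ℝ) / (k.factorial * (k + ν).factorial)

noncomputable def besselDenom (ν : ℕ) : PowerSeries ℝ :=
  PowerSeries.mk fun k => (1 : ℝ) / (k.factorial * (k + ν + 1).factorial)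

/-!
With `G = besselDenom ν`, the series `(ν+1)! G` is `Ĩ_{ν+1}` in the variable `x = (z/2)²`, so the
definition of `ζ_{ν+1}` says `(ν+1)! G = exp L` with `L = Σ_p (-1)^(p+1)/p ζ_{ν+1}(2p) 4^p x^p`;
differentiating, `G' = L' G`. The Bessel recurrence `F = (ν+1) G + x G'` for `F = besselNumer ν`
turns the quotient into a logarithmic derivative, `F / G = ν + 1 + x L'`. Hence the generating
series of the `b_n` is `x/(ν+1)! · (x L'/(ν+1) - 1)`, whose `n`-th coefficient is a multiple of the
`(n-1)`-st coefficient of `L`, i.e. of `ζ_{ν+1}(2n-2)`; `b_2` follows from `4 ζ_{ν+1}(2) = 1/(ν+2)`,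
the first coefficient of `exp L = (ν+1)! G`.
-/

open PowerSeries Nat

namespace PowerSeries

section CommRing

variable {R : Type*} [CommRing R]

theorem coeff_X_mul_derivative (f : R⟦X⟧) (n : ℕ) :
    coeff n (X * d⁄dX R f) = n * coeff n f := by
  cases n with
  | zero => simp
  | succ n => rw [coeff_succ_X_mul, coeff_derivative, mul_comm]; push_cast; rfl

end CommRing

section Field

variable {K : Type*} [Field K]

theorem mul_inv_eq_C_add_X_mul_of_derivative_eq {F G M : K⟦X⟧} {a : K}
    (hG : constantCoeff G ≠ 0) (hF : F = C a * G + X * d⁄dX K G) (hdG : d⁄dX K G = M * G) :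
    F * G⁻¹ = C a + X * M := by
  calc F * G⁻¹ = (C a + X * M) * (G * G⁻¹) := by rw [hF, hdG]; ring
    _ = C a + X * M := by rw [PowerSeries.mul_inv_cancel G hG, mul_one]

/-- `exp ∘ L`, meaningful when `constantCoeff L = 0`: then `L ^ j` with `j > n` does not
contribute to the `n`-th coefficient. -/
noncomputable def expComp (L : K⟦X⟧) : K⟦X⟧ :=
  mk fun n => ∑ j ∈ range (n + 1), (j ! : K)⁻¹ * coeff n (L ^ j)

noncomputable def expPartialSum (L : K⟦X⟧) (N : ℕ) : K⟦X⟧ :=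
  ∑ j ∈ range (N + 1), (j ! : K)⁻¹ • L ^ j

theorem coeff_expComp_eq_coeff_expPartialSum {L : K⟦X⟧} (hL : constantCoeff L = 0) {n N : ℕ}
    (hn : n ≤ N) : coeff n (expComp L) = coeff n (expPartialSum L N) := by
  simp only [expComp, expPartialSum, coeff_mk, map_sum, coeff_smul, smul_eq_mul]
  refine sum_subset (range_subset_range.2 (by omega)) fun j _ hj => ?_
  have hjn : (n : ℕ∞) < j := by simpa using hj
  rw [coeff_of_lt_order n (hjn.trans_le (le_order_pow_of_constantCoeff_eq_zero j hL)), mul_zero]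

theorem coeff_one_expComp (L : K⟦X⟧) : coeff 1 (expComp L) = coeff 1 L := by
  simp [expComp, sum_range_succ, coeff_one]

variable [CharZero K]

theorem derivative_expPartialSum_succ (L : K⟦X⟧) (N : ℕ) :
    d⁄dX K (expPartialSum L (N + 1)) = d⁄dX K L * expPartialSum L N := by
  rw [expPartialSum, map_sum, sum_range_succ', expPartialSum, mul_sum]
  simp only [pow_zero, Derivation.map_smul, Derivation.map_one_eq_zero, smul_zero, add_zero,
    Derivation.leibniz_pow, add_tsub_cancel_right]
  refine sum_congr rfl fun j _ => ?_
  have hcoeff : (((j + 1) * j ! : ℕ) : K)⁻¹ * ((j + 1 : ℕ) : K) = (j ! : K)⁻¹ := by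
    push_cast; field_simp
  rw [factorial_succ, ← Nat.cast_smul_eq_nsmul K, smul_smul, hcoeff, mul_smul_comm, smul_eq_mul,
    mul_comm]

theorem derivative_expComp {L : K⟦X⟧} (hL : constantCoeff L = 0) :
    d⁄dX K (expComp L) = d⁄dX K L * expComp L := by
  ext n
  calc coeff n (d⁄dX K (expComp L)) = coeff (n + 1) (expPartialSum L (n + 1)) * (n + 1) := by
        rw [coeff_derivative, coeff_expComp_eq_coeff_expPartialSum hL le_rfl]
    _ = coeff n (d⁄dX K L * expPartialSum L n) := by
        rw [← derivative_expPartialSum_succ, coeff_derivative]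
    _ = coeff n (d⁄dX K L * expComp L) := by
        simp only [coeff_mul]
        refine sum_congr rfl fun p hp => ?_
        rw [coeff_expComp_eq_coeff_expPartialSum hL (HasAntidiagonal.antidiagonal.snd_le hp)]

end Field

end PowerSeries

theorem constantCoeff_besselDenom (ν : ℕ) : constantCoeff (besselDenom ν) = ((ν + 1)! : ℝ)⁻¹ := by
  simp [besselDenom]

theorem besselNumer_eq (ν : ℕ) :
    besselNumer ν = C ((ν : ℝ) + 1) * besselDenom ν + X * d⁄dX ℝ (besselDenom ν) := by
  ext k
  rw [map_add, coeff_C_mul, coeff_X_mul_derivative, ← add_mul, besselNumer, besselDenom, coeff_mk,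
    coeff_mk, factorial_succ (k + ν)]
  push_cast
  field_simp
  ring

theorem eq_mul_coeff_of_mk_eq_X_mul_besselQuotient {ν : ℕ} {L : ℝ⟦X⟧} {b : ℕ → ℝ}
    (hdG : d⁄dX ℝ (besselDenom ν) = d⁄dX ℝ L * besselDenom ν)
    (hb : (mk fun n => if n = 0 then 0 else b n / ((ν + n)! * (n - 1)! : ℝ)) =
      C (1 / ((ν + 1)! : ℝ)) * X * (C (1 / ((ν : ℝ) + 1)) * besselNumer ν * (besselDenom ν)⁻¹ - 2))
    (n : ℕ) :
    b (n + 2) = (ν + (n + 2))! * (n + 1)! / ((ν + 1)! * (ν + 1)) * ((n + 1) * coeff (n + 1) L) := by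
  have hquot : C (1 / ((ν : ℝ) + 1)) * besselNumer ν * (besselDenom ν)⁻¹ - 2 =
      -1 + C (1 / ((ν : ℝ) + 1)) * (X * d⁄dX ℝ L) := by
    have hG0 : constantCoeff (besselDenom ν) ≠ 0 := by
      rw [constantCoeff_besselDenom]; positivity
    rw [mul_assoc, mul_inv_eq_C_add_X_mul_of_derivative_eq hG0 (besselNumer_eq ν) hdG, mul_add,
      ← mul_assoc, ← map_mul, one_div_mul_cancel (by positivity), map_one]
    ring
  have h := congrArg (coeff (n + 2)) hb
  rw [hquot, mul_assoc, coeff_C_mul, coeff_succ_X_mul, map_add, coeff_C_mul,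
    coeff_X_mul_derivative] at h
  simp only [coeff_mk, coeff_one, Nat.add_eq_zero_iff, two_ne_zero, one_ne_zero, and_false,
    if_false, map_neg, neg_zero, zero_add, show n + 2 - 1 = n + 1 by omega] at h
  rw [div_eq_iff (by positivity)] at h
  rw [h]
  push_cast
  field_simp

/-- The coefficients `b_n(ν)` defined by
`Σ_{n≥1} x^n b_n(ν)/((ν+n)!(n−1)!) = (x/(ν+1)!)(√x I_ν(2√x)/((ν+1) I_{ν+1}(2√x)) − 2)`
satisfy `b_n(ν) = (−1)^n (n+ν)!(n−1)!/((ν+1)!(ν+1)) 2^{2n−2} ζ_{ν+1}(2n−2)` for `n ≥ 2`;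
in particular `b_2(ν) = 1/(ν+1)`.  Here `zeta2 p` stands for `ζ_{ν+1}(2p)`, defined via
`log Ĩ_{ν+1}(z) = Σ_p ((−1)^{p+1}/p) ζ_{ν+1}(2p) z^{2p}` (i.e., in the variable `x = (z/2)²`,
`Ĩ_{ν+1} = exp(Σ_p ((−1)^{p+1}/p) ζ_{ν+1}(2p) 4^p x^p)`, the exponential of a series with
zero constant term being given coefficientwise by `coeff n (exp F) = Σ_j coeff n (F^j)/j!`). -/
theorem b_seq_eq_bessel_zeta (ν : ℕ) (zeta2 : ℕ → ℝ)
    (hlog : ∀ n,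
      PowerSeries.coeff n
          (PowerSeries.mk fun k =>
            ((ν + 1).factorial : ℝ) / (k.factorial * (k + ν + 1).factorial)) =
      ∑ j ∈ Finset.range (n + 1),
        ((j.factorial : ℝ))⁻¹ * PowerSeries.coeff n
          ((PowerSeries.mk fun p =>
            if p = 0 then (0 : ℝ) else (-1) ^ (p + 1) / p * zeta2 p * 4 ^ p) ^ j))
    (b : ℕ → ℝ)
    (hb : (PowerSeries.mk fun n =>
        if n = 0 then (0 : ℝ) else b n / (((ν + n).factorial : ℝ) * ((n - 1).factorial : ℝ))) =
      (PowerSeries.C (1 / ((ν + 1).factorial : ℝ)) * PowerSeries.X) *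
        (PowerSeries.C (1 / ((ν : ℝ) + 1)) * besselNumer ν * (besselDenom ν)⁻¹ - 2)) :
    (∀ n : ℕ, 2 ≤ n →
      b n = (-1) ^ n * (((n + ν).factorial : ℝ) * ((n - 1).factorial : ℝ)) /
        (((ν + 1).factorial : ℝ) * ((ν : ℝ) + 1)) * 2 ^ (2 * n - 2) * zeta2 (n - 1)) ∧
    b 2 = 1 / ((ν : ℝ) + 1) := by
  set L : ℝ⟦X⟧ := mk fun p => if p = 0 then 0 else (-1) ^ (p + 1) / p * zeta2 p * 4 ^ p with hL
  have hL0 : constantCoeff L = 0 := by simp [hL]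
  have hG : besselDenom ν = ((ν + 1)! : ℝ)⁻¹ • expComp L := by
    ext n
    rw [coeff_smul, expComp, coeff_mk, ← hlog n, besselDenom, coeff_mk, coeff_mk, smul_eq_mul]
    field_simp
  have hdG : d⁄dX ℝ (besselDenom ν) = d⁄dX ℝ L * besselDenom ν := by
    rw [hG, Derivation.map_smul, derivative_expComp hL0, mul_smul_comm]
  have hL1 : coeff 1 L = (ν + 1)! / (ν + 2)! := by
    rw [← coeff_one_expComp, ← smul_inv_smul₀ (by positivity : ((ν + 1)! : ℝ) ≠ 0) (expComp L),
      ← hG, coeff_smul, besselDenom, coeff_mk, add_comm 1 ν]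
    simp [div_eq_mul_inv]
  have hb' := eq_mul_coeff_of_mk_eq_X_mul_besselQuotient hdG hb
  refine ⟨fun n hn => ?_, ?_⟩
  · obtain ⟨m, rfl⟩ := Nat.exists_eq_add_of_le' hn
    rw [hb', hL, coeff_mk, if_neg m.succ_ne_zero, show m + 2 - 1 = m + 1 by omega,
      show 2 * (m + 2) - 2 = 2 * (m + 1) by omega, pow_mul, add_comm (m + 2) ν]
    push_cast
    field_simp
    ring
  · rw [hb', hL1, factorial_succ (ν + 1)]
    push_cast
    field_simp
    ring
end
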